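/- Every connected sob (shallow ordered bicograph) has diameter at most 5. -/

import Mathlib

/-- Terms building shallow ordered bicographs (sobs): a sob is built from
single colored vertices (`false` = color 1, `true` = color 2) by disjoint
union `U`, bijoin `B` (joining all pairs of vertices of different colors
lying in different parts), and ordered bijoin `O` (joining each color-1
vertex of the left part to each color-2 vertex of the right part). -/
inductive Sob : Type
  | leaf : Bool → Sob
  | U : Sob → Sob → Sob
  | B : Sob → Sob → Sob
  | O : Sob → Sob → Sob

namespace Sob

/-- Number of vertices. -/
def size : Sob → ℕ
  | leaf _ => 1
  | U s t => s.size + t.size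
  | B s t => s.size + t.size
  | O s t => s.size + t.size

/-- Height of the build tree (a leaf has height 1). -/
def height : Sob → ℕ
  | leaf _ => 1
  | U s t => max s.height t.height + 1
  | B s t => max s.height t.height + 1
  | O s t => max s.height t.height + 1

/-- Color of the `i`-th vertex (`false` = color 1, `true` = color 2). -/
def color : Sob → ℕ → Bool
  | leaf b, _ => b
  | U s t, i => if i < s.size then s.color i else t.color (i - s.size)
  | B s t, i => if i < s.size then s.color i else t.color (i - s.size)
  | O s t, i => if i < s.size then s.color i else t.color (i - s.size)

/-- Adjacency of the `i`-th and `j`-th vertices. -/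
def adj : Sob → ℕ → ℕ → Bool
  | leaf _, _, _ => false
  | U s t, i, j =>
      if i < s.size then
        (if j < s.size then s.adj i j else false)
      else
        (if j < s.size then false else t.adj (i - s.size) (j - s.size))
  | B s t, i, j =>
      if i < s.size then
        (if j < s.size then s.adj i j else decide (s.color i ≠ t.color (j - s.size)))
      else
        (if j < s.size then decide (t.color (i - s.size) ≠ s.color j)
         else t.adj (i - s.size) (j - s.size))
  | O s t, i, j =>
      if i < s.size then
        (if j < s.size then s.adj i j else (!s.color i) && t.color (j - s.size))
      else
        (if j < s.size then (!s.color j) && t.color (i - s.size)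
         else t.adj (i - s.size) (j - s.size))

/-- The bipartite graph modeled by a sob term. -/
def graph (s : Sob) : SimpleGraph (Fin s.size) where
  Adj i j := i ≠ j ∧ (s.adj i j = true ∨ s.adj j i = true)
  symm := ⟨by
    rintro i j ⟨h1, h2⟩
    exact ⟨h1.symm, h2.symm⟩⟩
  loopless := ⟨fun i h => h.1 rfl⟩

end Sob

namespace Sob

def Aa (s : Sob) (i j : ℕ) : Prop := s.adj i j = true ∨ s.adj j i = true

lemma Aa_comm {s : Sob} {i j : ℕ} : Aa s i j ↔ Aa s j i := Or.comm

lemma adj_color : ∀ (s : Sob) (i j : ℕ), s.adj i j = true → s.color i ≠ s.color j := by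
  intro s
  induction s with
  | leaf b => intro i j h; simp [adj] at h
  | U s t ihs iht =>
      intro i j h
      by_cases hi : i < s.size <;> by_cases hj : j < s.size <;>
        simp only [adj, color, hi, hj, if_true, if_false] at h ⊢
      · exact ihs i j h
      · simp at h
      · simp at h
      · exact iht _ _ h
  | B s t ihs iht =>
      intro i j h
      by_cases hi : i < s.size <;> by_cases hj : j < s.size <;>
        simp only [adj, color, hi, hj, if_true, if_false] at h ⊢
      · exact ihs i j h
      · exact of_decide_eq_true h
      · exact of_decide_eq_true h
      · exact iht _ _ h
  | O s t ihs iht =>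
      intro i j h
      by_cases hi : i < s.size <;> by_cases hj : j < s.size <;>
        simp only [adj, color, hi, hj, if_true, if_false] at h ⊢
      · exact ihs i j h
      · simp only [Bool.and_eq_true, Bool.not_eq_true'] at h
        rw [h.1, h.2]; simp
      · simp only [Bool.and_eq_true, Bool.not_eq_true'] at h
        rw [h.1, h.2]; simp
      · exact iht _ _ h

lemma Aa_color {s : Sob} {i j : ℕ} (h : Aa s i j) : s.color i ≠ s.color j := by
  rcases h with h | h
  · exact adj_color s i j h
  · exact (adj_color s j i h).symm

end Sob

namespace Sob

variable {s t : Sob} {i j : ℕ}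

lemma color_in (c : Sob → Sob → Sob) (hc : c = U ∨ c = B ∨ c = O) (hi : i < s.size) :
    (c s t).color i = s.color i := by
  rcases hc with rfl | rfl | rfl <;> simp [color, hi]

lemma color_out (c : Sob → Sob → Sob) (hc : c = U ∨ c = B ∨ c = O) (hi : ¬ i < s.size) :
    (c s t).color i = t.color (i - s.size) := by
  rcases hc with rfl | rfl | rfl <;> simp [color, hi]

lemma Aa_U_in (hi : i < s.size) (hj : j < s.size) : Aa (U s t) i j ↔ Aa s i j := by
  simp [Aa, adj, hi, hj]

lemma Aa_B_in (hi : i < s.size) (hj : j < s.size) : Aa (B s t) i j ↔ Aa s i j := by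
  simp [Aa, adj, hi, hj]

lemma Aa_O_in (hi : i < s.size) (hj : j < s.size) : Aa (O s t) i j ↔ Aa s i j := by
  simp [Aa, adj, hi, hj]

lemma Aa_U_out (hi : ¬ i < s.size) (hj : ¬ j < s.size) :
    Aa (U s t) i j ↔ Aa t (i - s.size) (j - s.size) := by
  simp [Aa, adj, hi, hj]

lemma Aa_B_out (hi : ¬ i < s.size) (hj : ¬ j < s.size) :
    Aa (B s t) i j ↔ Aa t (i - s.size) (j - s.size) := by
  simp [Aa, adj, hi, hj]

lemma Aa_O_out (hi : ¬ i < s.size) (hj : ¬ j < s.size) :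
    Aa (O s t) i j ↔ Aa t (i - s.size) (j - s.size) := by
  simp [Aa, adj, hi, hj]

lemma Aa_U_cross (hi : i < s.size) (hj : ¬ j < s.size) : ¬ Aa (U s t) i j := by
  simp [Aa, adj, hi, hj]

lemma Aa_B_cross (hi : i < s.size) (hj : ¬ j < s.size) :
    Aa (B s t) i j ↔ (B s t).color i ≠ (B s t).color j := by
  simp only [Aa, adj, hi, hj, if_true, if_false, color]
  simp [ne_comm]

lemma Aa_O_cross (hi : i < s.size) (hj : ¬ j < s.size) :
    Aa (O s t) i j ↔ ((O s t).color i = false ∧ (O s t).color j = true) := by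
  simp only [Aa, adj, hi, hj, if_true, if_false, color]
  simp [Bool.and_eq_true, Bool.not_eq_true']

/-- `s` has no induced path on 7 vertices. -/
def P7free (s : Sob) : Prop :=
  ∀ v : ℕ → ℕ, (∀ k, k ≤ 6 → v k < s.size) →
    (∀ i j, i ≤ 6 → j ≤ 6 → i ≠ j → v i ≠ v j) →
    (∀ i j, i ≤ 6 → j ≤ 6 → i ≠ j → (Aa s (v i) (v j) ↔ (j = i + 1 ∨ i = j + 1))) → False

end Sob

namespace Sob

set_option maxRecDepth 10000 in
lemma combU : ∀ (p : Fin 7 → Bool),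
    (∀ i j : Fin 7, (i:ℕ)+1 = (j:ℕ) → p i = p j) →
    ∀ k : Fin 7, p k = p 0 := by decide

set_option maxRecDepth 10000 in
lemma combB : ∀ (a : Bool) (p : Fin 7 → Bool),
    (∀ i j : Fin 7, (i:ℕ)+2 ≤ (j:ℕ) → p i ≠ p j →
      (if (i:ℕ)%2 = 0 then a else !a) = (if (j:ℕ)%2 = 0 then a else !a)) →
    ∀ k : Fin 7, p k = p 0 := by decide

set_option synthInstance.maxSize 2000 in
set_option synthInstance.maxHeartbeats 1000000 in
set_option maxRecDepth 1000000 in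
lemma combO : ∀ (a : Bool) (p : Fin 7 → Bool),
    (∀ i j : Fin 7,
      ((i:ℕ)+1 = (j:ℕ) → p i = true → p j = false →
        (if (i:ℕ)%2 = 0 then a else !a) = false ∧ (if (j:ℕ)%2 = 0 then a else !a) = true) ∧
      ((i:ℕ)+1 = (j:ℕ) → p i = false → p j = true →
        (if (j:ℕ)%2 = 0 then a else !a) = false ∧ (if (i:ℕ)%2 = 0 then a else !a) = true) ∧
      ((i:ℕ)+2 ≤ (j:ℕ) → p i = true → p j = false →
        ¬((if (i:ℕ)%2 = 0 then a else !a) = false ∧ (if (j:ℕ)%2 = 0 then a else !a) = true)) ∧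
      ((i:ℕ)+2 ≤ (j:ℕ) → p i = false → p j = true →
        ¬((if (j:ℕ)%2 = 0 then a else !a) = false ∧ (if (i:ℕ)%2 = 0 then a else !a) = true))) →
    ∀ k : Fin 7, p k = p 0 := by decide

lemma alt_form (d : ℕ → Bool) (h : ∀ k, k ≤ 5 → d (k+1) = !(d k)) :
    ∀ k, k ≤ 6 → d k = if k % 2 = 0 then d 0 else !(d 0) := by
  have h1 := h 0 (by norm_num); have h2 := h 1 (by norm_num)
  have h3 := h 2 (by norm_num); have h4 := h 3 (by norm_num)
  have h5 := h 4 (by norm_num); have h6 := h 5 (by norm_num)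
  norm_num at h1 h2 h3 h4 h5 h6
  intro k hk
  interval_cases k <;> simp [h1, h2, h3, h4, h5, h6]

lemma split_case (s t c : Sob)
    (hin : ∀ i j, i < s.size → j < s.size → (Aa c i j ↔ Aa s i j))
    (hout : ∀ i j, ¬ i < s.size → ¬ j < s.size → (Aa c i j ↔ Aa t (i - s.size) (j - s.size)))
    (Hs : P7free s) (Ht : P7free t)
    (v : ℕ → ℕ) (hb : ∀ k, k ≤ 6 → v k < s.size + t.size)
    (hinj : ∀ i j, i ≤ 6 → j ≤ 6 → i ≠ j → v i ≠ v j)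
    (hadj : ∀ i j, i ≤ 6 → j ≤ 6 → i ≠ j → (Aa c (v i) (v j) ↔ (j = i + 1 ∨ i = j + 1)))
    (hall : ∀ k, k ≤ 6 → (v k < s.size ↔ v 0 < s.size)) : False := by
  by_cases h0 : v 0 < s.size
  · have hvs : ∀ k, k ≤ 6 → v k < s.size := fun k hk => (hall k hk).mpr h0
    exact Hs v hvs hinj (fun i j hi hj hne =>
      (hin (v i) (v j) (hvs i hi) (hvs j hj)).symm.trans (hadj i j hi hj hne))
  · have hvt : ∀ k, k ≤ 6 → ¬ v k < s.size := fun k hk h' => h0 ((hall k hk).mp h')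
    refine Ht (fun k => v k - s.size) (fun k hk => ?_) (fun i j hi hj hne hne' => ?_)
      (fun i j hi hj hne =>
        (hout (v i) (v j) (hvt i hi) (hvt j hj)).symm.trans (hadj i j hi hj hne))
    · have := hb k hk; have := hvt k hk
      show v k - s.size < t.size
      omega
    · have h1 := hvt i hi; have h2 := hvt j hj; have h3 := hinj i j hi hj hne
      have hne'' : v i - s.size = v j - s.size := hne'
      omega

end Sob

namespace Sob

lemma bool_flip {a b : Bool} (h : a ≠ b) : b = !a := by revert h; cases a <;> cases b <;> simp

lemma case_U (s t : Sob) (Hs : P7free s) (Ht : P7free t) : P7free (U s t) := by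
  intro v hb hinj hadj
  have hsz : ∀ k, k ≤ 6 → v k < s.size + t.size := by
    intro k hk; have := hb k hk; simpa [size] using this
  have hcons : ∀ k, k ≤ 5 → Aa (U s t) (v k) (v (k+1)) :=
    fun k hk => (hadj k (k+1) (by omega) (by omega) (by omega)).mpr (Or.inl rfl)
  have hstep : ∀ i j : Fin 7, (i:ℕ)+1 = (j:ℕ) →
      (fun k : Fin 7 => decide (v k < s.size)) i = (fun k : Fin 7 => decide (v k < s.size)) j := by
    intro i j hij
    have hc := hcons i (by omega)
    rw [hij] at hc
    by_cases h1 : v (i:ℕ) < s.size <;> by_cases h2 : v (j:ℕ) < s.size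
    · simp [h1, h2]
    · exact absurd hc (Aa_U_cross h1 h2)
    · exact absurd (Aa_comm.mp hc) (Aa_U_cross h2 h1)
    · simp [h1, h2]
  have hallf := combU _ hstep
  have hall : ∀ k, k ≤ 6 → (v k < s.size ↔ v 0 < s.size) := by
    intro k hk
    have := hallf ⟨k, by omega⟩
    simpa [decide_eq_decide] using this
  exact split_case s t (U s t) (fun i j hi hj => Aa_U_in hi hj)
    (fun i j hi hj => Aa_U_out hi hj) Hs Ht v hsz hinj hadj hall

end Sob

namespace Sob

lemma case_B (s t : Sob) (Hs : P7free s) (Ht : P7free t) : P7free (B s t) := by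
  intro v hb hinj hadj
  have hsz : ∀ k, k ≤ 6 → v k < s.size + t.size := by
    intro k hk; have := hb k hk; simpa [size] using this
  have hcons : ∀ k, k ≤ 5 → Aa (B s t) (v k) (v (k+1)) :=
    fun k hk => (hadj k (k+1) (by omega) (by omega) (by omega)).mpr (Or.inl rfl)
  set d : ℕ → Bool := fun k => (B s t).color (v k) with hdd
  have halt : ∀ k, k ≤ 5 → d (k+1) = !(d k) := by
    intro k hk
    exact bool_flip (Aa_color (hcons k hk))
  have hD := alt_form d halt
  have master : ∀ i j, i ≤ 6 → j ≤ 6 → j ≠ i+1 → i ≠ j+1 → i ≠ j →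
      v i < s.size → ¬ v j < s.size → d i = d j := by
    intro i j hi hj hne1 hne2 hne hvi hvj
    by_contra hdiff
    have hAa : Aa (B s t) (v i) (v j) := (Aa_B_cross hvi hvj).mpr hdiff
    have := (hadj i j hi hj hne).mp hAa
    omega
  have hstep : ∀ i j : Fin 7, (i:ℕ)+2 ≤ (j:ℕ) →
      (fun k : Fin 7 => decide (v k < s.size)) i ≠ (fun k : Fin 7 => decide (v k < s.size)) j →
      (if (i:ℕ)%2 = 0 then d 0 else !(d 0)) = (if (j:ℕ)%2 = 0 then d 0 else !(d 0)) := by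
    intro i j hij hpp
    rw [← hD (i:ℕ) (by omega), ← hD (j:ℕ) (by omega)]
    by_cases h1 : v (i:ℕ) < s.size <;> by_cases h2 : v (j:ℕ) < s.size
    · simp [h1, h2] at hpp
    · exact master i j (by omega) (by omega) (by omega) (by omega) (by omega) h1 h2
    · exact (master j i (by omega) (by omega) (by omega) (by omega) (by omega) h2 h1).symm
    · simp [h1, h2] at hpp
  have hallf := combB (d 0) _ hstep
  have hall : ∀ k, k ≤ 6 → (v k < s.size ↔ v 0 < s.size) := by
    intro k hk
    have := hallf ⟨k, by omega⟩
    simpa [decide_eq_decide] using this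
  exact split_case s t (B s t) (fun i j hi hj => Aa_B_in hi hj)
    (fun i j hi hj => Aa_B_out hi hj) Hs Ht v hsz hinj hadj hall

end Sob

namespace Sob

lemma case_O (s t : Sob) (Hs : P7free s) (Ht : P7free t) : P7free (O s t) := by
  intro v hb hinj hadj
  have hsz : ∀ k, k ≤ 6 → v k < s.size + t.size := by
    intro k hk; have := hb k hk; simpa [size] using this
  have hcons : ∀ k, k ≤ 5 → Aa (O s t) (v k) (v (k+1)) :=
    fun k hk => (hadj k (k+1) (by omega) (by omega) (by omega)).mpr (Or.inl rfl)
  set d : ℕ → Bool := fun k => (O s t).color (v k) with hdd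
  have halt : ∀ k, k ≤ 5 → d (k+1) = !(d k) := by
    intro k hk
    exact bool_flip (Aa_color (hcons k hk))
  have hD := alt_form d halt
  have hstep : ∀ i j : Fin 7,
      (((i:ℕ)+1 = (j:ℕ) → (fun k : Fin 7 => decide (v k < s.size)) i = true →
          (fun k : Fin 7 => decide (v k < s.size)) j = false →
        (if (i:ℕ)%2 = 0 then d 0 else !(d 0)) = false ∧
          (if (j:ℕ)%2 = 0 then d 0 else !(d 0)) = true) ∧
      ((i:ℕ)+1 = (j:ℕ) → (fun k : Fin 7 => decide (v k < s.size)) i = false →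
          (fun k : Fin 7 => decide (v k < s.size)) j = true →
        (if (j:ℕ)%2 = 0 then d 0 else !(d 0)) = false ∧
          (if (i:ℕ)%2 = 0 then d 0 else !(d 0)) = true) ∧
      ((i:ℕ)+2 ≤ (j:ℕ) → (fun k : Fin 7 => decide (v k < s.size)) i = true →
          (fun k : Fin 7 => decide (v k < s.size)) j = false →
        ¬((if (i:ℕ)%2 = 0 then d 0 else !(d 0)) = false ∧
          (if (j:ℕ)%2 = 0 then d 0 else !(d 0)) = true)) ∧
      ((i:ℕ)+2 ≤ (j:ℕ) → (fun k : Fin 7 => decide (v k < s.size)) i = false →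
          (fun k : Fin 7 => decide (v k < s.size)) j = true →
        ¬((if (j:ℕ)%2 = 0 then d 0 else !(d 0)) = false ∧
          (if (i:ℕ)%2 = 0 then d 0 else !(d 0)) = true))) := by
    intro i j
    refine ⟨?_, ?_, ?_, ?_⟩
    · intro hij hpi hpj
      have hvi : v (i:ℕ) < s.size := of_decide_eq_true hpi
      have hvj : ¬ v (j:ℕ) < s.size := of_decide_eq_false hpj
      have hAa : Aa (O s t) (v (i:ℕ)) (v (j:ℕ)) :=
        (hadj i j (by omega) (by omega) (by omega)).mpr (by omega)
      have hc := (Aa_O_cross hvi hvj).mp hAa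
      rw [← hD (i:ℕ) (by omega), ← hD (j:ℕ) (by omega)]
      exact hc
    · intro hij hpi hpj
      have hvi : ¬ v (i:ℕ) < s.size := of_decide_eq_false hpi
      have hvj : v (j:ℕ) < s.size := of_decide_eq_true hpj
      have hAa : Aa (O s t) (v (j:ℕ)) (v (i:ℕ)) :=
        Aa_comm.mp ((hadj i j (by omega) (by omega) (by omega)).mpr (by omega))
      have hc := (Aa_O_cross hvj hvi).mp hAa
      rw [← hD (i:ℕ) (by omega), ← hD (j:ℕ) (by omega)]
      exact hc
    · intro hij hpi hpj hpair
      have hvi : v (i:ℕ) < s.size := of_decide_eq_true hpi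
      have hvj : ¬ v (j:ℕ) < s.size := of_decide_eq_false hpj
      rw [← hD (i:ℕ) (by omega), ← hD (j:ℕ) (by omega)] at hpair
      have hAa := (Aa_O_cross hvi hvj).mpr hpair
      have := (hadj i j (by omega) (by omega) (by omega)).mp hAa
      omega
    · intro hij hpi hpj hpair
      have hvi : ¬ v (i:ℕ) < s.size := of_decide_eq_false hpi
      have hvj : v (j:ℕ) < s.size := of_decide_eq_true hpj
      rw [← hD (i:ℕ) (by omega), ← hD (j:ℕ) (by omega)] at hpair
      have hAa := (Aa_O_cross hvj hvi).mpr hpair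
      have := (hadj j i (by omega) (by omega) (by omega)).mp hAa
      omega
  have hallf := combO (d 0) _ hstep
  have hall : ∀ k, k ≤ 6 → (v k < s.size ↔ v 0 < s.size) := by
    intro k hk
    have := hallf ⟨k, by omega⟩
    simpa [decide_eq_decide] using this
  exact split_case s t (O s t) (fun i j hi hj => Aa_O_in hi hj)
    (fun i j hi hj => Aa_O_out hi hj) Hs Ht v hsz hinj hadj hall

theorem p7free : ∀ s : Sob, P7free s := by
  intro s
  induction s with
  | leaf b =>
      intro v hb hinj hadj
      have h0 := hb 0 (by norm_num)
      have h1 := hb 1 (by norm_num)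
      have h2 := hinj 0 1 (by norm_num) (by norm_num) (by norm_num)
      simp [size] at h0 h1
      omega
  | U s t ihs iht => exact case_U s t ihs iht
  | B s t ihs iht => exact case_B s t ihs iht
  | O s t ihs iht => exact case_O s t ihs iht

end Sob

namespace Sob

lemma exists_prefix {V : Type*} {G : SimpleGraph V} {u v : V} :
    ∀ (w : G.Walk u v) (k : ℕ), ∃ p : G.Walk u (w.getVert k), p.length ≤ k := by
  intro w
  induction w with
  | nil =>
      intro k
      exact ⟨SimpleGraph.Walk.nil.copy rfl
        (SimpleGraph.Walk.getVert_of_length_le _ (Nat.zero_le k)).symm, by simp⟩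
  | @cons a b c hab q ih =>
      intro k
      cases k with
      | zero =>
          exact ⟨SimpleGraph.Walk.nil.copy rfl (SimpleGraph.Walk.getVert_zero _).symm, by simp⟩
      | succ k =>
          obtain ⟨p, hp⟩ := ih k
          refine ⟨(SimpleGraph.Walk.cons hab p).copy rfl
            (SimpleGraph.Walk.getVert_cons_succ q hab).symm, ?_⟩
          simpa using Nat.succ_le_succ hp

lemma exists_suffix {V : Type*} {G : SimpleGraph V} {u v : V} :
    ∀ (w : G.Walk u v) (k : ℕ), ∃ p : G.Walk (w.getVert k) v, p.length ≤ w.length - k := by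
  intro w
  induction w with
  | nil =>
      intro k
      exact ⟨SimpleGraph.Walk.nil.copy
        (SimpleGraph.Walk.getVert_of_length_le _ (Nat.zero_le k)).symm rfl, by simp⟩
  | @cons a b c hab q ih =>
      intro k
      cases k with
      | zero =>
          refine ⟨(SimpleGraph.Walk.cons hab q).copy
            (SimpleGraph.Walk.getVert_zero _).symm rfl, ?_⟩
          simp
      | succ k =>
          obtain ⟨p, hp⟩ := ih k
          refine ⟨p.copy (SimpleGraph.Walk.getVert_cons_succ q hab).symm rfl, ?_⟩
          simp only [SimpleGraph.Walk.length_copy, SimpleGraph.Walk.length_cons]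
          omega

end Sob


/-- every connected sob has diameter at most 5. -/
theorem sob_diameter_le_five (s : Sob) (h : s.graph.Connected) :
    ∀ u v : Fin s.size, s.graph.dist u v ≤ 5 := by
  intro u v
  by_contra hgt
  push_neg at hgt
  obtain ⟨w, hw⟩ := (h u v).exists_walk_length_eq_dist
  have hlen : 6 ≤ w.length := by omega
  have hdk : ∀ k, k ≤ w.length → s.graph.dist u (w.getVert k) = k := by
    intro k hk
    have h1 : s.graph.dist u (w.getVert k) ≤ k := by
      obtain ⟨p, hp⟩ := Sob.exists_prefix w k
      exact le_trans (SimpleGraph.dist_le p) hp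
    have h2 : s.graph.dist (w.getVert k) v ≤ w.length - k := by
      obtain ⟨p, hp⟩ := Sob.exists_suffix w k
      exact le_trans (SimpleGraph.dist_le p) hp
    have h3 := h.dist_triangle (u := u) (v := w.getVert k) (w := v)
    omega
  set f : ℕ → Fin s.size := fun k => w.getVert k with hf
  have hdist : ∀ k, k ≤ 6 → s.graph.dist u (f k) = k := fun k hk => hdk k (by omega)
  have hinj : ∀ i j, i ≤ 6 → j ≤ 6 → i ≠ j → f i ≠ f j := by
    intro i j hi hj hne heq
    have d1 := hdist i hi; have d2 := hdist j hj
    rw [heq] at d1; omega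
  have hadjiff : ∀ i j, i ≤ 6 → j ≤ 6 → i ≠ j →
      (s.graph.Adj (f i) (f j) ↔ (j = i + 1 ∨ i = j + 1)) := by
    intro i j hi hj hne
    constructor
    · intro ha
      have t1 := h.dist_triangle (u := u) (v := f i) (w := f j)
      have t2 := h.dist_triangle (u := u) (v := f j) (w := f i)
      have e1 : s.graph.dist (f i) (f j) = 1 := SimpleGraph.dist_eq_one_iff_adj.mpr ha
      have e2 : s.graph.dist (f j) (f i) = 1 := SimpleGraph.dist_eq_one_iff_adj.mpr ha.symm
      have d1 := hdist i hi; have d2 := hdist j hj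
      omega
    · intro hc
      rcases hc with hc | hc
      · subst hc; exact w.adj_getVert_succ (by omega)
      · subst hc; exact (w.adj_getVert_succ (i := j) (by omega)).symm
  exact Sob.p7free s (fun k => (f k : ℕ)) (fun k _ => (f k).isLt)
    (fun i j hi hj hne he => hinj i j hi hj hne (Fin.val_injective he))
    (fun i j hi hj hne =>
      ⟨fun hAa => (hadjiff i j hi hj hne).mp ⟨hinj i j hi hj hne, hAa⟩,
       fun hc => ((hadjiff i j hi hj hne).mpr hc).2⟩)
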